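/- Let n ≥ 4 be an even integer and let n₁ be an integer with 1 ≤ n₁ ≤ n/2. The multiset of eigenvalues (roots of the characteristic polynomial, with multiplicity) of the Laplacian matrix L(Γ_{n,n₁}) is: 0 with multiplicity 1, n−2 with multiplicity n/2 − n₁, and n with multiplicity (n/2 + n₁) − 1. -/

import Mathlib

/-- The graph `Γ_{n,n₁}` on `Fin n`: the complete graph `K_n` with the edges
`{i, i + n/2}` for `n₁ ≤ i < n/2` deleted. For `n₁ = 0` this is the cocktail party
graph `CP_n`, and for `1 ≤ n₁ ≤ n/2` it is obtained from `CP_n` by adding `n₁` of the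
`n/2` missing edges. -/
def gammaGraph (n n₁ : ℕ) : SimpleGraph (Fin n) where
  Adj i j := i ≠ j ∧ ¬ ∃ k : ℕ, n₁ ≤ k ∧ k < n / 2 ∧
      (((i : ℕ) = k ∧ (j : ℕ) = k + n / 2) ∨ ((j : ℕ) = k ∧ (i : ℕ) = k + n / 2))
  symm := ⟨fun _ _ ⟨h1, h2⟩ =>
    ⟨h1.symm, fun ⟨k, hk1, hk2, hor⟩ => h2 ⟨k, hk1, hk2, hor.symm⟩⟩⟩
  loopless := ⟨fun _ h => h.1 rfl⟩

noncomputable instance (n n₁ : ℕ) : DecidableRel (gammaGraph n n₁).Adj :=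
  fun _ _ => Classical.dec _


/-!
Write `n = m + m` and split the vertices into the halves `{p}` and `{p + m}`, `p < m`. In
these coordinates the Laplacian is a block matrix `[[A, B], [B, A]]`, which is similar over
any commutative ring to `[[A + B, B], [0, A - B]]`; hence its characteristic polynomial is
`χ(A + B) χ(A - B)`. Here `A + B = n I - 2 J` is a scalar plus a rank-one matrix, with
eigenvalues `0` once and `n` with multiplicity `m - 1`, while `A - B` is diagonal, with entry
`n` at the `n₁` pairs `{p, p + m}` that are edges and `n - 2` at the `m - n₁` that are not.
-/

open Matrix Polynomial Finset

namespace Matrix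

variable {ι R : Type*} [Fintype ι] [DecidableEq ι]

theorem det_fromBlocks_self [CommRing R] (A B : Matrix ι ι R) :
    (fromBlocks A B B A).det = (A + B).det * (A - B).det := by
  have h : fromBlocks A B B A =
      fromBlocks 1 0 1 1 * fromBlocks (A + B) B 0 (A - B) * fromBlocks 1 0 (-1) 1 := by
    simp only [fromBlocks_multiply]
    congr 1 <;> simp
  rw [h, det_mul, det_mul, det_fromBlocks_zero₁₂, det_fromBlocks_zero₂₁, det_fromBlocks_zero₁₂]
  simp

theorem charpoly_fromBlocks_self [CommRing R] (A B : Matrix ι ι R) :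
    (fromBlocks A B B A).charpoly = (A + B).charpoly * (A - B).charpoly := by
  rw [charpoly, charmatrix_fromBlocks, det_fromBlocks_self, charpoly, charpoly]
  congr 2 <;> simp only [charmatrix, map_add, map_sub] <;> abel

theorem charpoly_scalar_add_vecMulVec [CommRing R] [Nonempty ι] (c : R) (u v : ι → R) :
    (scalar ι c + vecMulVec u v).charpoly =
      (X - C c) ^ (Fintype.card ι - 1) * (X - C (c + u ⬝ᵥ v)) := by
  have hcard : Fintype.card ι = Fintype.card ι - 1 + 1 :=
    (Nat.sub_add_cancel Fintype.card_pos).symm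
  have hshift := charpoly_sub_scalar (vecMulVec u v) (-c)
  rw [map_neg, sub_neg_eq_add, add_comm, charpoly_vecMulVec] at hshift
  rw [hshift, sub_comp, smul_comp, X_pow_comp, X_pow_comp, hcard, Nat.add_sub_cancel, pow_succ,
    C_add, map_neg, smul_eq_C_mul]
  ring

theorem diagonal_sum_fromBlocks_self_sub [Ring R] (K L : Matrix ι ι R) :
    diagonal (fun x => ∑ y, fromBlocks K L L K x y) - fromBlocks K L L K =
      fromBlocks (diagonal (fun p => ∑ q, (K p q + L p q)) - K) (-L) (-L)
        (diagonal (fun p => ∑ q, (K p q + L p q)) - K) := by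
  ext (p | p) (q | q) <;> simp [diagonal_apply, Fintype.sum_sum_type, sum_add_distrib, add_comm]

end Matrix

theorem Fin.prod_univ_apply_ite_val_lt {α M : Type*} [CommMonoid M] (f : α → M) {m k : ℕ}
    (hk : k ≤ m) (a b : α) :
    ∏ p : Fin m, f (if (p : ℕ) < k then a else b) = f a ^ k * f b ^ (m - k) := by
  rw [Finset.prod_apply_ite, Finset.prod_const, Finset.prod_const, Fin.card_filter_val_lt,
    filter_not, card_sdiff_of_subset (filter_subset _ _), Fin.card_filter_val_lt, card_univ,
    Fintype.card_fin, min_eq_right hk]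

theorem SimpleGraph.reindex_lapMatrix {V W R : Type*} [Fintype V] [Fintype W] [DecidableEq V]
    [DecidableEq W] [Ring R] (G : SimpleGraph V) [DecidableRel G.Adj] (e : V ≃ W) :
    reindex e e (G.lapMatrix R) =
      diagonal (fun x => ∑ y, reindex e e (G.adjMatrix R) x y) - reindex e e (G.adjMatrix R) := by
  have hdeg (v : V) : (G.degree v : R) = ∑ w, G.adjMatrix R v w := by
    simpa [mulVec, dotProduct] using (adjMatrix_mulVec_const_apply (G := G) (a := (1 : R))).symm
  ext x y
  simp [lapMatrix, degMatrix, diagonal_apply, hdeg, ← e.symm.sum_comp]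

-- `finSumFinEquiv` sends `inl p` to `p` and `inr p` to `p + m`.
theorem reindex_adjMatrix_gammaGraph (R : Type*) [Ring R] (m n₁ : ℕ) :
    reindex finSumFinEquiv.symm finSumFinEquiv.symm ((gammaGraph (m + m) n₁).adjMatrix R) =
      fromBlocks (of (fun _ _ => 1) - 1)
        (of (fun _ _ => 1) - diagonal fun p : Fin m => if (p : ℕ) < n₁ then 0 else 1)
        (of (fun _ _ => 1) - diagonal fun p : Fin m => if (p : ℕ) < n₁ then 0 else 1)
        (of (fun _ _ => 1) - 1) := by
  have hm : (m + m) / 2 = m := by omega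
  ext (p | p) (q | q) <;>
    simp [gammaGraph, hm, SimpleGraph.adjMatrix_apply, one_apply, diagonal_apply, Fin.ext_iff] <;>
    split_ifs <;> grind

theorem charpoly_lapMatrix_gammaGraph_eq_mul (R : Type*) [CommRing R] (m n₁ : ℕ) :
    ((gammaGraph (m + m) n₁).lapMatrix R).charpoly =
      (scalar (Fin m) ((m + m : ℕ) : R) + vecMulVec (fun _ => -2) (fun _ => 1)).charpoly *
        (diagonal fun p : Fin m =>
          if (p : ℕ) < n₁ then ((m + m : ℕ) : R) else (m + m : ℕ) - 2).charpoly := by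
  set J : Matrix (Fin m) (Fin m) R := of fun _ _ => 1
  set E : Matrix (Fin m) (Fin m) R := diagonal fun p => if (p : ℕ) < n₁ then 0 else 1
  have hdeg : (fun p => ∑ q, ((J - 1) p q + (J - E) p q)) =
      fun p : Fin m => ((m + m : ℕ) : R) - 1 - if (p : ℕ) < n₁ then 0 else 1 := by
    ext p
    simp [J, E, sum_add_distrib, one_apply, diagonal_apply]
    ring
  rw [← charpoly_reindex finSumFinEquiv.symm, SimpleGraph.reindex_lapMatrix,
    reindex_adjMatrix_gammaGraph, diagonal_sum_fromBlocks_self_sub, charpoly_fromBlocks_self,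
    hdeg]
  congr 2 <;> ext p q <;> simp [one_apply, diagonal_apply, vecMulVec_apply] <;>
    split_ifs <;> ring

theorem charpoly_lapMatrix_gammaGraph {R : Type*} [CommRing R] {m n₁ : ℕ} (hm : 0 < m)
    (hn₁ : n₁ ≤ m) :
    ((gammaGraph (m + m) n₁).lapMatrix R).charpoly =
      X * (X - C ((m + m : ℕ) : R)) ^ (m - 1 + n₁) * (X - C ((m + m : ℕ) - 2 : R)) ^ (m - n₁) := by
  have : Nonempty (Fin m) := ⟨⟨0, hm⟩⟩
  have hzero : ((m + m : ℕ) : R) + (fun _ : Fin m => -2) ⬝ᵥ (fun _ => 1) = 0 := by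
    simp [dotProduct]
    ring
  rw [charpoly_lapMatrix_gammaGraph_eq_mul, charpoly_scalar_add_vecMulVec, charpoly_diagonal,
    Fin.prod_univ_apply_ite_val_lt (fun c => X - C c) hn₁, Fintype.card_fin, hzero, C_0,
    sub_zero, pow_add]
  ring

theorem roots_charpoly_lapMatrix_gammaGraph_general (n n₁ : ℕ) (hn : 4 ≤ n) (hev : Even n)
    (h2 : n₁ ≤ n / 2) :
    (SimpleGraph.lapMatrix ℝ (gammaGraph n n₁)).charpoly.roots =
      Multiset.replicate 1 (0 : ℝ) + Multiset.replicate (n / 2 - n₁) ((n : ℝ) - 2) +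
        Multiset.replicate (n / 2 + n₁ - 1) (n : ℝ) := by
  obtain ⟨m, rfl⟩ := hev
  have hm : (m + m) / 2 = m := by omega
  rw [hm] at h2 ⊢
  rw [charpoly_lapMatrix_gammaGraph (by omega) h2, ← roots_multiset_prod_X_sub_C
    (.replicate 1 0 + .replicate (m - n₁) (((m + m : ℕ) : ℝ) - 2) +
      .replicate (m + n₁ - 1) ((m + m : ℕ) : ℝ))]
  simp only [Multiset.map_add, Multiset.prod_add, Multiset.map_replicate,
    Multiset.prod_replicate, C_0, sub_zero, pow_one, show m + n₁ - 1 = m - 1 + n₁ by omega]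
  congr 1
  ring

/-- The Laplacian eigenvalues of `Γ_{n,n₁}` (roots of the characteristic polynomial
with multiplicity) are `0` with multiplicity `1`, `n - 2` with multiplicity
`n/2 - n₁`, and `n` with multiplicity `(n/2 + n₁) - 1`. -/
theorem roots_charpoly_lapMatrix_gammaGraph (n n₁ : ℕ) (hn : 4 ≤ n) (hev : Even n)
    (h1 : 1 ≤ n₁) (h2 : n₁ ≤ n / 2) :
    (SimpleGraph.lapMatrix ℝ (gammaGraph n n₁)).charpoly.roots =
      Multiset.replicate 1 (0 : ℝ) + Multiset.replicate (n / 2 - n₁) ((n : ℝ) - 2) +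
        Multiset.replicate (n / 2 + n₁ - 1) (n : ℝ) :=
  roots_charpoly_lapMatrix_gammaGraph_general n n₁ hn hev h2
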